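/- arXiv:2107.01471 — 3 statements merged into one kernel-verified Lean document; each statement's English description precedes it below -/
import Mathlib

section
/- Let (x*,y*) be a stationary point with dual solution (ρ*,w*,z*) and ρ* ∈ (0,1), and define F_I(α,β) = f_I(αw*+(1−α)x*, βz*+(1−β)y*) for I ∈ {R,C} and α,β ∈ [0,1]. Then: (1) for each fixed β ∈ [0,1], the function α ↦ F_C(α,β) is nondecreasing and convex on [0,1], and α ↦ F_R(α,β) is nonincreasing and affine on [0,1]; (2) for each fixed α ∈ [0,1], the function β ↦ F_R(α,β) is nondecreasing and convex on [0,1], and β ↦ F_C(α,β) is nonincreasing and affine on [0,1]. -/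
open scoped BigOperators Classical
open Matrix Filter

noncomputable section

namespace TS

/-- The probability simplex in `ℝ^k`. -/
def Δ (k : ℕ) : Set (Fin k → ℝ) := {x | (∀ i, 0 ≤ x i) ∧ ∑ i, x i = 1}

/-- Maximum entry of a vector. -/
def vmax {k : ℕ} (u : Fin k → ℝ) : ℝ := ⨆ i, u i

/-- Maximum entry of a vector over an index set. -/
def vmaxOn {k : ℕ} (S : Set (Fin k)) (u : Fin k → ℝ) : ℝ := ⨆ i ∈ S, u i

/-- The support of a vector: indices with positive entries. -/
def supp {k : ℕ} (u : Fin k → ℝ) : Set (Fin k) := {i | 0 < u i}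

/-- The set of indices where `u` attains its maximum entry. -/
def suppmax {k : ℕ} (u : Fin k → ℝ) : Set (Fin k) := {i | ∀ j, u j ≤ u i}

/-- The set of indices where `u` attains its minimum entry. -/
def suppmin {k : ℕ} (u : Fin k → ℝ) : Set (Fin k) := {i | ∀ j, u i ≤ u j}

variable {m n : ℕ}

/-- `f_R(x,y) = max(Ry) − xᵀRy`. -/
def fR (R : Matrix (Fin m) (Fin n) ℝ) (x : Fin m → ℝ) (y : Fin n → ℝ) : ℝ :=
  vmax (R.mulVec y) - x ⬝ᵥ R.mulVec y

/-- `f_C(x,y) = max(Cᵀx) − xᵀCy`. -/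
def fC (C : Matrix (Fin m) (Fin n) ℝ) (x : Fin m → ℝ) (y : Fin n → ℝ) : ℝ :=
  vmax (Matrix.vecMul x C) - x ⬝ᵥ C.mulVec y

/-- `f(x,y) = max{f_R(x,y), f_C(x,y)}`. -/
def fNE (R C : Matrix (Fin m) (Fin n) ℝ) (x : Fin m → ℝ) (y : Fin n → ℝ) : ℝ :=
  max (fR R x y) (fC C x y)

/-- `S_R(y) = suppmax(Ry)`. -/
def SR (R : Matrix (Fin m) (Fin n) ℝ) (y : Fin n → ℝ) : Set (Fin m) := suppmax (R.mulVec y)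

/-- `S_C(x) = suppmax(Cᵀx)`. -/
def SC (C : Matrix (Fin m) (Fin n) ℝ) (x : Fin m → ℝ) : Set (Fin n) := suppmax (Matrix.vecMul x C)

/-- `g` has right (one-sided) derivative `d` at `0`: `lim_{θ→0⁺} (g θ − g 0)/θ = d`. -/
def HasPosDeriv (g : ℝ → ℝ) (d : ℝ) : Prop :=
  Tendsto (fun θ : ℝ => (g θ - g 0) / θ) (nhdsWithin 0 (Set.Ioi 0)) (nhds d)

/-- `(x,y)` is a stationary point: for every `(x',y')` in the product simplex, the scaled
directional derivative `Df(x,y,x',y')` of `f` exists and is nonnegative. -/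
def IsStationary (R C : Matrix (Fin m) (Fin n) ℝ) (x : Fin m → ℝ) (y : Fin n → ℝ) : Prop :=
  ∀ x' ∈ Δ m, ∀ y' ∈ Δ n, ∃ d : ℝ,
    HasPosDeriv (fun θ : ℝ => fNE R C (x + θ • (x' - x)) (y + θ • (y' - y))) d ∧ 0 ≤ d

/-- The function `T(x,y,x',y',ρ,w,z)`. -/
def Tfun (R C : Matrix (Fin m) (Fin n) ℝ) (x : Fin m → ℝ) (y : Fin n → ℝ)
    (x' : Fin m → ℝ) (y' : Fin n → ℝ) (ρ : ℝ) (w : Fin m → ℝ) (z : Fin n → ℝ) : ℝ :=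
  ρ * (w ⬝ᵥ R.mulVec y' - x ⬝ᵥ R.mulVec y' - x' ⬝ᵥ R.mulVec y + x ⬝ᵥ R.mulVec y)
    + (1 - ρ) * (x' ⬝ᵥ C.mulVec z - x ⬝ᵥ C.mulVec y' - x' ⬝ᵥ C.mulVec y + x ⬝ᵥ C.mulVec y)

/-- Feasibility for the tuple `(ρ,w,z)`: `ρ ∈ [0,1]`, `w ∈ Δ_m` with `supp w ⊆ S_R(y)`,
`z ∈ Δ_n` with `supp z ⊆ S_C(x)`. -/
def dualFeasible (R C : Matrix (Fin m) (Fin n) ℝ) (x : Fin m → ℝ) (y : Fin n → ℝ)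
    (ρ : ℝ) (w : Fin m → ℝ) (z : Fin n → ℝ) : Prop :=
  ρ ∈ Set.Icc (0:ℝ) 1 ∧ w ∈ Δ m ∧ supp w ⊆ SR R y ∧ z ∈ Δ n ∧ supp z ⊆ SC C x

/-- `max_{ρ,w,z} T(x,y,x',y',ρ,w,z)` over feasible `(ρ,w,z)`. -/
def innerMax (R C : Matrix (Fin m) (Fin n) ℝ) (x : Fin m → ℝ) (y : Fin n → ℝ)
    (x' : Fin m → ℝ) (y' : Fin n → ℝ) : ℝ :=
  sSup {t : ℝ | ∃ ρ w z, dualFeasible R C x y ρ w z ∧ t = Tfun R C x y x' y' ρ w z}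

/-- `V(x,y) = min_{(x',y') ∈ Δ_m×Δ_n} max_{ρ,w,z} T(x,y,x',y',ρ,w,z)`. -/
def Vval (R C : Matrix (Fin m) (Fin n) ℝ) (x : Fin m → ℝ) (y : Fin n → ℝ) : ℝ :=
  sInf {t : ℝ | ∃ x' ∈ Δ m, ∃ y' ∈ Δ n, t = innerMax R C x y x' y'}

/-- `min_{(x',y') ∈ Δ_m×Δ_n} T(x,y,x',y',ρ,w,z)`. -/
def innerMin (R C : Matrix (Fin m) (Fin n) ℝ) (x : Fin m → ℝ) (y : Fin n → ℝ)
    (ρ : ℝ) (w : Fin m → ℝ) (z : Fin n → ℝ) : ℝ :=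
  sInf {t : ℝ | ∃ x' ∈ Δ m, ∃ y' ∈ Δ n, t = Tfun R C x y x' y' ρ w z}

/-- `(ρ,w,z)` is a dual solution at `(x,y)`. -/
def IsDualSolution (R C : Matrix (Fin m) (Fin n) ℝ) (x : Fin m → ℝ) (y : Fin n → ℝ)
    (ρ : ℝ) (w : Fin m → ℝ) (z : Fin n → ℝ) : Prop :=
  dualFeasible R C x y ρ w z ∧ Vval R C x y = innerMin R C x y ρ w z

/-- `(x,y)` is an `ε`-approximate Nash equilibrium. -/
def IsEpsNash (R C : Matrix (Fin m) (Fin n) ℝ) (x : Fin m → ℝ) (y : Fin n → ℝ) (ε : ℝ) : Prop :=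
  (∀ x' ∈ Δ m, x' ⬝ᵥ R.mulVec y ≤ x ⬝ᵥ R.mulVec y + ε) ∧
  (∀ y' ∈ Δ n, x ⬝ᵥ C.mulVec y' ≤ x ⬝ᵥ C.mulVec y + ε)

/-- A Nash equilibrium is a `0`-approximate Nash equilibrium. -/
def IsNash (R C : Matrix (Fin m) (Fin n) ℝ) (x : Fin m → ℝ) (y : Fin n → ℝ) : Prop :=
  IsEpsNash R C x y 0

/-- `λ* = (w*−x*)ᵀRz*`. -/
def lamStar (R : Matrix (Fin m) (Fin n) ℝ) (xs ws : Fin m → ℝ) (zs : Fin n → ℝ) : ℝ :=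
  (ws - xs) ⬝ᵥ R.mulVec zs

/-- `μ* = w*ᵀC(z*−y*)`. -/
def muStar (C : Matrix (Fin m) (Fin n) ℝ) (ws : Fin m → ℝ) (ys zs : Fin n → ℝ) : ℝ :=
  ws ⬝ᵥ C.mulVec (zs - ys)

/-- `p* = f_R(x*,z*)/(f_R(x*,z*)+f_C(w*,z*)−f_R(w*,z*))` (`= 0` if the denominator is `0`,
by the real-division-by-zero convention). -/
def pstar (R C : Matrix (Fin m) (Fin n) ℝ) (xs ws : Fin m → ℝ) (zs : Fin n → ℝ) : ℝ :=
  fR R xs zs / (fR R xs zs + fC C ws zs - fR R ws zs)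

/-- `q* = f_C(w*,y*)/(f_C(w*,y*)+f_R(w*,z*)−f_C(w*,z*))` (`= 0` if the denominator is `0`). -/
def qstar (R C : Matrix (Fin m) (Fin n) ℝ) (ws : Fin m → ℝ) (ys zs : Fin n → ℝ) : ℝ :=
  fC C ws ys / (fC C ws ys + fR R ws zs - fC C ws zs)

/-- The adjusted pair `(ũ,ṽ)` of Method 3. -/
def tildeUV (R C : Matrix (Fin m) (Fin n) ℝ) (xs : Fin m → ℝ) (ys : Fin n → ℝ)
    (ws : Fin m → ℝ) (zs : Fin n → ℝ) : (Fin m → ℝ) × (Fin n → ℝ) :=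
  if fR R ws zs ≤ fC C ws zs then
    (pstar R C xs ws zs • ws + (1 - pstar R C xs ws zs) • xs, zs)
  else
    (ws, qstar R C ws ys zs • zs + (1 - qstar R C ws ys zs) • ys)

set_option maxHeartbeats 1000000

variable {k : ℕ}

lemma le_vmax (u : Fin (k+1) → ℝ) (i : Fin (k+1)) : u i ≤ vmax u :=
  le_ciSup (Set.Finite.bddAbove (Set.finite_range u)) i
lemma vmax_le {u : Fin (k+1) → ℝ} {a : ℝ} (h : ∀ i, u i ≤ a) : vmax u ≤ a := ciSup_le h
lemma vmax_eq_of_suppmax {u : Fin (k+1) → ℝ} {i : Fin (k+1)} (hi : i ∈ suppmax u) :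
    vmax u = u i := le_antisymm (vmax_le hi) (le_vmax u i)
lemma argmaxF_nonempty (c : Fin (k+1) → ℝ) :
    (Finset.univ.filter (fun i => ∀ j, c j ≤ c i)).Nonempty := by
  obtain ⟨i0, hi0⟩ := Finite.exists_max c
  exact ⟨i0, by simpa using hi0⟩
def bslope (c b : Fin (k+1) → ℝ) : ℝ :=
  (Finset.univ.filter (fun i => ∀ j, c j ≤ c i)).sup' (argmaxF_nonempty c) b
lemma bslope_mem (c b : Fin (k+1) → ℝ) :
    ∃ i, (i ∈ suppmax c) ∧ b i = bslope c b := by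
  obtain ⟨i, hi, hbi⟩ := Finset.exists_mem_eq_sup' (argmaxF_nonempty c) b
  exact ⟨i, by simpa [suppmax] using (Finset.mem_filter.1 hi).2, hbi.symm⟩
lemma eventually_vmax_affine (c b : Fin (k+1) → ℝ) :
    ∀ᶠ θ in nhdsWithin (0:ℝ) (Set.Ioi 0),
      vmax (fun i => c i + θ * b i) = vmax c + θ * bslope c b := by
  set S := Finset.univ.filter (fun i => ∀ j, c j ≤ c i) with hSdef
  set B := bslope c b with hBdef
  have key : ∀ᶠ θ in nhdsWithin (0:ℝ) (Set.Ioi 0),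
      ∀ i, c i + θ * b i ≤ vmax c + θ * B := by
    rw [eventually_all]
    intro i
    by_cases hi : i ∈ S
    · filter_upwards [self_mem_nhdsWithin] with θ hθ
      have hci : c i = vmax c :=
        (vmax_eq_of_suppmax (by simpa [suppmax] using (Finset.mem_filter.1 hi).2)).symm
      have hbi : b i ≤ B := Finset.le_sup' b hi
      have : θ * b i ≤ θ * B :=
        mul_le_mul_of_nonneg_left hbi (le_of_lt (Set.mem_Ioi.1 hθ))
      linarith
    · have hlt : c i < vmax c := by
        simp only [hSdef, Finset.mem_filter, Finset.mem_univ, true_and, not_forall, not_le] at hi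
        obtain ⟨j, hj⟩ := hi
        exact lt_of_lt_of_le hj (le_vmax c j)
      have hcont : Tendsto (fun θ : ℝ => (vmax c - c i) + θ * (B - b i))
          (nhdsWithin (0:ℝ) (Set.Ioi 0)) (nhds ((vmax c - c i) + 0 * (B - b i))) :=
        Tendsto.mono_left ((Continuous.tendsto (by fun_prop) 0)) nhdsWithin_le_nhds
      have hpos : (0:ℝ) < (vmax c - c i) + 0 * (B - b i) := by simpa using hlt
      filter_upwards [hcont.eventually_const_lt hpos] with θ hθ
      nlinarith [hθ]
  filter_upwards [key] with θ hθ
  refine le_antisymm (vmax_le hθ) ?_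
  obtain ⟨i, hi, hbi⟩ := bslope_mem c b
  have : c i + θ * b i ≤ vmax (fun i => c i + θ * b i) := le_vmax (fun i => c i + θ * b i) i
  rwa [hbi, ← vmax_eq_of_suppmax hi] at this
lemma tendsto_quot {g : ℝ → ℝ} {f0 D q : ℝ} (hg0 : g 0 = f0)
    (hev : ∀ᶠ θ in nhdsWithin (0:ℝ) (Set.Ioi 0), g θ = f0 + θ * (D - θ * q)) :
    Tendsto (fun θ => (g θ - g 0) / θ) (nhdsWithin (0:ℝ) (Set.Ioi 0)) (nhds D) := by
  have h2 : Tendsto (fun θ : ℝ => D - θ * q) (nhdsWithin (0:ℝ) (Set.Ioi 0)) (nhds D) := by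
    have := Tendsto.mono_left
      ((Continuous.tendsto (f := fun θ : ℝ => D - θ * q) (by fun_prop) 0))
      (nhdsWithin_le_nhds (s := Set.Ioi (0:ℝ)))
    simpa using this
  refine Tendsto.congr' ?_ h2
  filter_upwards [hev, self_mem_nhdsWithin] with θ hθ hθ'
  have hθ0 : θ ≠ 0 := ne_of_gt (Set.mem_Ioi.1 hθ')
  rw [hθ, hg0]
  field_simp
  ring

variable {m n : ℕ}

lemma fR_eventual (R : Matrix (Fin (m+1)) (Fin (n+1)) ℝ)
    (x Δx : Fin (m+1) → ℝ) (y Δy : Fin (n+1) → ℝ) :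
    ∀ᶠ θ in nhdsWithin (0:ℝ) (Set.Ioi 0),
      fR R (x + θ • Δx) (y + θ • Δy) = fR R x y +
        θ * ((bslope (R.mulVec y) (R.mulVec Δy)
              - (Δx ⬝ᵥ R.mulVec y + x ⬝ᵥ R.mulVec Δy)) - θ * (Δx ⬝ᵥ R.mulVec Δy)) := by
  filter_upwards [eventually_vmax_affine (R.mulVec y) (R.mulVec Δy)] with θ hθ
  have h1 : R.mulVec (y + θ • Δy) = fun i => (R.mulVec y) i + θ * (R.mulVec Δy) i := by
    funext i
    rw [mulVec_add, mulVec_smul]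
    simp
  have h2 : (x + θ • Δx) ⬝ᵥ R.mulVec (y + θ • Δy)
      = x ⬝ᵥ R.mulVec y + θ * (Δx ⬝ᵥ R.mulVec y + x ⬝ᵥ R.mulVec Δy)
        + θ * θ * (Δx ⬝ᵥ R.mulVec Δy) := by
    rw [mulVec_add, mulVec_smul]
    simp only [add_dotProduct, dotProduct_add, smul_dotProduct, dotProduct_smul, smul_eq_mul]
    ring
  have hv : vmax (R.mulVec (y + θ • Δy))
      = vmax (R.mulVec y) + θ * bslope (R.mulVec y) (R.mulVec Δy) := by rw [h1]; exact hθ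
  unfold fR
  rw [hv, h2]
  ring
lemma fC_eventual (C : Matrix (Fin (m+1)) (Fin (n+1)) ℝ)
    (x Δx : Fin (m+1) → ℝ) (y Δy : Fin (n+1) → ℝ) :
    ∀ᶠ θ in nhdsWithin (0:ℝ) (Set.Ioi 0),
      fC C (x + θ • Δx) (y + θ • Δy) = fC C x y +
        θ * ((bslope (vecMul x C) (vecMul Δx C)
              - (Δx ⬝ᵥ C.mulVec y + x ⬝ᵥ C.mulVec Δy)) - θ * (Δx ⬝ᵥ C.mulVec Δy)) := by
  filter_upwards [eventually_vmax_affine (vecMul x C) (vecMul Δx C)] with θ hθ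
  have h1 : vecMul (x + θ • Δx) C = fun j => (vecMul x C) j + θ * (vecMul Δx C) j := by
    funext j
    rw [add_vecMul, smul_vecMul]
    simp
  have h2 : (x + θ • Δx) ⬝ᵥ C.mulVec (y + θ • Δy)
      = x ⬝ᵥ C.mulVec y + θ * (Δx ⬝ᵥ C.mulVec y + x ⬝ᵥ C.mulVec Δy)
        + θ * θ * (Δx ⬝ᵥ C.mulVec Δy) := by
    rw [mulVec_add, mulVec_smul]
    simp only [add_dotProduct, dotProduct_add, smul_dotProduct, dotProduct_smul, smul_eq_mul]
    ring
  have hv : vmax (vecMul (x + θ • Δx) C)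
      = vmax (vecMul x C) + θ * bslope (vecMul x C) (vecMul Δx C) := by rw [h1]; exact hθ
  unfold fC
  rw [hv, h2]
  ring

-- base vector lemmas needed below
lemma dot_le_vmax {x u : Fin (k+1) → ℝ} (hx : x ∈ Δ (k+1)) : x ⬝ᵥ u ≤ vmax u := by
  calc x ⬝ᵥ u ≤ ∑ i, x i * vmax u := by
        refine Finset.sum_le_sum fun i _ => mul_le_mul_of_nonneg_left (le_vmax u i) (hx.1 i)
    _ = vmax u := by rw [← Finset.sum_mul, hx.2, one_mul]
lemma dot_eq_vmax {x u : Fin (k+1) → ℝ} (hx : x ∈ Δ (k+1)) (hs : supp x ⊆ suppmax u) :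
    x ⬝ᵥ u = vmax u := by
  have : ∀ i ∈ Finset.univ, x i * u i = x i * vmax u := by
    intro i _
    rcases eq_or_lt_of_le (hx.1 i) with h | h
    · rw [← h, zero_mul, zero_mul]
    · rw [vmax_eq_of_suppmax (hs h)]
  calc x ⬝ᵥ u = ∑ i, x i * vmax u := Finset.sum_congr rfl this
    _ = vmax u := by rw [← Finset.sum_mul, hx.2, one_mul]
def evec (i : Fin (k+1)) : Fin (k+1) → ℝ := fun j => if j = i then 1 else 0
lemma evec_mem_Δ (i : Fin (k+1)) : evec i ∈ Δ (k+1) := by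
  constructor
  · intro j; unfold evec; positivity
  · simp [evec]
lemma supp_evec (i : Fin (k+1)) : supp (evec i) ⊆ {i} := by
  intro j hj
  simp only [supp, evec, Set.mem_setOf_eq] at hj
  by_contra h
  have h' : j ≠ i := fun e => h (by simp [e])
  rw [if_neg h'] at hj
  exact lt_irrefl 0 hj
lemma evec_dot (i : Fin (k+1)) (u : Fin (k+1) → ℝ) : evec i ⬝ᵥ u = u i := by
  simp [evec, dotProduct]
lemma dot_evec (i : Fin (k+1)) (u : Fin (k+1) → ℝ) : u ⬝ᵥ evec i = u i := by
  simp [evec, dotProduct]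
lemma dot_mulVec_mem_Icc {M : Matrix (Fin (m+1)) (Fin (n+1)) ℝ}
    (hM : ∀ i j, M i j ∈ Set.Icc (0:ℝ) 1) {x : Fin (m+1) → ℝ} {y : Fin (n+1) → ℝ}
    (hx : x ∈ Δ (m+1)) (hy : y ∈ Δ (n+1)) : x ⬝ᵥ M.mulVec y ∈ Set.Icc (0:ℝ) 1 := by
  have hrow : ∀ i, M.mulVec y i ∈ Set.Icc (0:ℝ) 1 := by
    intro i
    rw [Set.mem_Icc]
    have : M.mulVec y i = ∑ j, M i j * y j := rfl
    rw [this]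
    constructor
    · apply Finset.sum_nonneg; intro j _; exact mul_nonneg (hM i j).1 (hy.1 j)
    · calc ∑ j, M i j * y j
        _ ≤ ∑ j, y j := Finset.sum_le_sum fun j _ => by
            nlinarith [(hM i j).1, (hM i j).2, hy.1 j]
        _ = 1 := hy.2
  rw [Set.mem_Icc]
  have hdef : x ⬝ᵥ M.mulVec y = ∑ i, x i * M.mulVec y i := rfl
  rw [hdef]
  constructor
  · apply Finset.sum_nonneg; intro i _; exact mul_nonneg (hx.1 i) (hrow i).1
  · calc ∑ i, x i * M.mulVec y i
      _ ≤ ∑ i, x i := Finset.sum_le_sum fun i _ => by nlinarith [(hrow i).1, (hrow i).2, hx.1 i]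
      _ = 1 := hx.2

lemma Tfun_bounds {R C : Matrix (Fin (m+1)) (Fin (n+1)) ℝ}
    (hR : ∀ i j, R i j ∈ Set.Icc (0:ℝ) 1) (hC : ∀ i j, C i j ∈ Set.Icc (0:ℝ) 1)
    {x x' w : Fin (m+1) → ℝ} {y y' z : Fin (n+1) → ℝ} {ρ : ℝ}
    (hfeas : dualFeasible R C x y ρ w z)
    (hx : x ∈ Δ (m+1)) (hy : y ∈ Δ (n+1)) (hx' : x' ∈ Δ (m+1)) (hy' : y' ∈ Δ (n+1)) :
    -2 ≤ Tfun R C x y x' y' ρ w z ∧ Tfun R C x y x' y' ρ w z ≤ 2 := by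
  obtain ⟨⟨hρ0, hρ1⟩, hw, _, hz, _⟩ := hfeas
  have b1 := dot_mulVec_mem_Icc hR hw hy'
  have b2 := dot_mulVec_mem_Icc hR hx hy'
  have b3 := dot_mulVec_mem_Icc hR hx' hy
  have b4 := dot_mulVec_mem_Icc hR hx hy
  have b5 := dot_mulVec_mem_Icc hC hx' hz
  have b6 := dot_mulVec_mem_Icc hC hx hy'
  have b7 := dot_mulVec_mem_Icc hC hx' hy
  have b8 := dot_mulVec_mem_Icc hC hx hy
  rw [Set.mem_Icc] at b1 b2 b3 b4 b5 b6 b7 b8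
  have hA1 : (-2:ℝ) ≤ w ⬝ᵥ R.mulVec y' - x ⬝ᵥ R.mulVec y' - x' ⬝ᵥ R.mulVec y + x ⬝ᵥ R.mulVec y := by
    linarith [b1.1, b2.2, b3.2, b4.1]
  have hA2 : w ⬝ᵥ R.mulVec y' - x ⬝ᵥ R.mulVec y' - x' ⬝ᵥ R.mulVec y + x ⬝ᵥ R.mulVec y ≤ 2 := by
    linarith [b1.2, b2.1, b3.1, b4.2]
  have hB1 : (-2:ℝ) ≤ x' ⬝ᵥ C.mulVec z - x ⬝ᵥ C.mulVec y' - x' ⬝ᵥ C.mulVec y + x ⬝ᵥ C.mulVec y := by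
    linarith [b5.1, b6.2, b7.2, b8.1]
  have hB2 : x' ⬝ᵥ C.mulVec z - x ⬝ᵥ C.mulVec y' - x' ⬝ᵥ C.mulVec y + x ⬝ᵥ C.mulVec y ≤ 2 := by
    linarith [b5.2, b6.1, b7.1, b8.2]
  unfold Tfun
  constructor
  · nlinarith
  · nlinarith


lemma deriv_le {fR0 fC0 DR DC qR qC d : ℝ} {gR gC : ℝ → ℝ}
    (hR0 : gR 0 = fR0) (hC0 : gC 0 = fC0)
    (EvR : ∀ᶠ θ in nhdsWithin (0:ℝ) (Set.Ioi 0), gR θ = fR0 + θ * (DR - θ * qR))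
    (EvC : ∀ᶠ θ in nhdsWithin (0:ℝ) (Set.Ioi 0), gC θ = fC0 + θ * (DC - θ * qC))
    (hd : Tendsto (fun θ : ℝ => (max (gR θ) (gC θ) - max (gR 0) (gC 0)) / θ)
      (nhdsWithin (0:ℝ) (Set.Ioi 0)) (nhds d)) :
    max fR0 fC0 + d ≤ max (fR0 + DR) (fC0 + DC) := by
  have hg0 : max (gR 0) (gC 0) = max fR0 fC0 := by rw [hR0, hC0]
  rcases lt_trichotomy fC0 fR0 with hlt | heq | hgt
  · have hcont : Tendsto (fun θ : ℝ => (fC0 + θ * (DC - θ * qC)) - (fR0 + θ * (DR - θ * qR)))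
        (nhdsWithin (0:ℝ) (Set.Ioi 0)) (nhds ((fC0 + 0 * (DC - 0 * qC)) - (fR0 + 0 * (DR - 0 * qR)))) :=
      Tendsto.mono_left ((Continuous.tendsto (by fun_prop) 0)) nhdsWithin_le_nhds
    have hevlt := hcont.eventually_lt_const
      (show fC0 + 0 * (DC - 0 * qC) - (fR0 + 0 * (DR - 0 * qR)) < 0 by simpa using hlt)
    have hgev : ∀ᶠ θ in nhdsWithin (0:ℝ) (Set.Ioi 0),
        max (gR θ) (gC θ) = fR0 + θ * (DR - θ * qR) := by
      filter_upwards [EvR, EvC, hevlt] with θ h1 h2 h3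
      rw [h1, h2]
      exact max_eq_left (by linarith)
    have hq := tendsto_quot (g := fun θ : ℝ => max (gR θ) (gC θ))
      (by show max (gR 0) (gC 0) = fR0; rw [hg0]; exact max_eq_left hlt.le) hgev
    have hdeq : d = DR := tendsto_nhds_unique hd hq
    rw [max_eq_left hlt.le, hdeq]
    exact le_max_left _ _
  · have htR : Tendsto (fun θ : ℝ => DR - θ * qR)
        (nhdsWithin (0:ℝ) (Set.Ioi 0)) (nhds DR) := by
      have := Tendsto.mono_left
        ((Continuous.tendsto (f := fun θ : ℝ => DR - θ * qR) (by fun_prop) 0))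
        (nhdsWithin_le_nhds (s := Set.Ioi (0:ℝ)))
      simpa using this
    have htC : Tendsto (fun θ : ℝ => DC - θ * qC)
        (nhdsWithin (0:ℝ) (Set.Ioi 0)) (nhds DC) := by
      have := Tendsto.mono_left
        ((Continuous.tendsto (f := fun θ : ℝ => DC - θ * qC) (by fun_prop) 0))
        (nhdsWithin_le_nhds (s := Set.Ioi (0:ℝ)))
      simpa using this
    have hquot : ∀ᶠ θ in nhdsWithin (0:ℝ) (Set.Ioi 0),
        max (DR - θ * qR) (DC - θ * qC)
          = (max (gR θ) (gC θ) - max (gR 0) (gC 0)) / θ := by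
      filter_upwards [EvR, EvC, self_mem_nhdsWithin] with θ h1 h2 hθ
      have hθ0 : (0:ℝ) < θ := hθ
      rw [h1, h2, hg0, heq, max_self]
      rcases le_total (DR - θ * qR) (DC - θ * qC) with h | h
      · rw [max_eq_right h, max_eq_right (by nlinarith : fR0 + θ * (DR - θ * qR) ≤ fR0 + θ * (DC - θ * qC))]
        field_simp
        ring
      · rw [max_eq_left h, max_eq_left (by nlinarith : fR0 + θ * (DC - θ * qC) ≤ fR0 + θ * (DR - θ * qR))]
        field_simp
        ring
    have hq : Tendsto (fun θ : ℝ => (max (gR θ) (gC θ) - max (gR 0) (gC 0)) / θ)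
        (nhdsWithin (0:ℝ) (Set.Ioi 0)) (nhds (max DR DC)) :=
      (htR.max htC).congr' hquot
    have hdeq : d = max DR DC := tendsto_nhds_unique hd hq
    rw [hdeq, heq, max_self]
    rcases le_total DR DC with h | h
    · rw [max_eq_right h]
      have : fR0 + DC = fC0 + DC := by rw [heq]
      rw [this]
      exact le_max_right _ _
    · rw [max_eq_left h]
      exact le_max_left _ _
  · have hcont : Tendsto (fun θ : ℝ => (fR0 + θ * (DR - θ * qR)) - (fC0 + θ * (DC - θ * qC)))
        (nhdsWithin (0:ℝ) (Set.Ioi 0)) (nhds ((fR0 + 0 * (DR - 0 * qR)) - (fC0 + 0 * (DC - 0 * qC)))) :=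
      Tendsto.mono_left ((Continuous.tendsto (by fun_prop) 0)) nhdsWithin_le_nhds
    have hevlt := hcont.eventually_lt_const
      (show fR0 + 0 * (DR - 0 * qR) - (fC0 + 0 * (DC - 0 * qC)) < 0 by simpa using hgt)
    have hgev : ∀ᶠ θ in nhdsWithin (0:ℝ) (Set.Ioi 0),
        max (gR θ) (gC θ) = fC0 + θ * (DC - θ * qC) := by
      filter_upwards [EvR, EvC, hevlt] with θ h1 h2 h3
      rw [h1, h2]
      exact max_eq_right (by linarith)
    have hq := tendsto_quot (g := fun θ : ℝ => max (gR θ) (gC θ))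
      (by show max (gR 0) (gC 0) = fC0; rw [hg0]; exact max_eq_right hgt.le) hgev
    have hdeq : d = DC := tendsto_nhds_unique hd hq
    rw [max_eq_right hgt.le, hdeq]
    exact le_max_right _ _

lemma keyT {R C : Matrix (Fin (m+1)) (Fin (n+1)) ℝ}
    (hR : ∀ i j, R i j ∈ Set.Icc (0:ℝ) 1) (hC : ∀ i j, C i j ∈ Set.Icc (0:ℝ) 1)
    {xs : Fin (m+1) → ℝ} {ys : Fin (n+1) → ℝ} {ρs : ℝ} {ws : Fin (m+1) → ℝ} {zs : Fin (n+1) → ℝ}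
    (hxs : xs ∈ Δ (m+1)) (hys : ys ∈ Δ (n+1))
    (hstat : IsStationary R C xs ys)
    (hdual : IsDualSolution R C xs ys ρs ws zs) :
    ∀ x' ∈ Δ (m+1), ∀ y' ∈ Δ (n+1), fNE R C xs ys ≤ Tfun R C xs ys x' y' ρs ws zs := by
  have stepA : ∀ x' ∈ Δ (m+1), ∀ y' ∈ Δ (n+1), fNE R C xs ys ≤ innerMax R C xs ys x' y' := by
    intro x' hx' y' hy'
    set DR := bslope (R.mulVec ys) (R.mulVec (y' - ys))
      - ((x' - xs) ⬝ᵥ R.mulVec ys + xs ⬝ᵥ R.mulVec (y' - ys)) with hDRdef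
    set DC := bslope (vecMul xs C) (vecMul (x' - xs) C)
      - ((x' - xs) ⬝ᵥ C.mulVec ys + xs ⬝ᵥ C.mulVec (y' - ys)) with hDCdef
    obtain ⟨iR, hiR, hbiR⟩ := bslope_mem (R.mulVec ys) (R.mulVec (y' - ys))
    obtain ⟨jC, hjC, hbjC⟩ := bslope_mem (vecMul xs C) (vecMul (x' - xs) C)
    -- feasibility of the two vertex dual candidates
    have hsuppR : supp (evec iR) ⊆ SR R ys := by
      refine (supp_evec iR).trans ?_
      intro t ht
      rw [Set.mem_singleton_iff] at ht
      subst ht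
      exact hiR
    have hsuppC : supp (evec jC) ⊆ SC C xs := by
      refine (supp_evec jC).trans ?_
      intro t ht
      rw [Set.mem_singleton_iff] at ht
      subst ht
      exact hjC
    have hfeas1 : dualFeasible R C xs ys 1 (evec iR) (evec jC) :=
      ⟨⟨zero_le_one, le_refl 1⟩, evec_mem_Δ iR, hsuppR, evec_mem_Δ jC, hsuppC⟩
    have hfeas0 : dualFeasible R C xs ys 0 (evec iR) (evec jC) :=
      ⟨⟨le_refl 0, zero_le_one⟩, evec_mem_Δ iR, hsuppR, evec_mem_Δ jC, hsuppC⟩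
    -- dot product algebra
    have e4 : R.mulVec (y' - ys) = R.mulVec y' - R.mulVec ys := by
      rw [Matrix.mulVec_sub]
    have c4 : vecMul (x' - xs) C = vecMul x' C - vecMul xs C := by
      rw [Matrix.sub_vecMul]
    have e5 : xs ⬝ᵥ R.mulVec (y' - ys) = xs ⬝ᵥ R.mulVec y' - xs ⬝ᵥ R.mulVec ys := by
      rw [e4, dotProduct_sub]
    have e6 : (x' - xs) ⬝ᵥ R.mulVec ys = x' ⬝ᵥ R.mulVec ys - xs ⬝ᵥ R.mulVec ys := by
      rw [sub_dotProduct]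
    have c5 : xs ⬝ᵥ C.mulVec (y' - ys) = xs ⬝ᵥ C.mulVec y' - xs ⬝ᵥ C.mulVec ys := by
      rw [Matrix.mulVec_sub, dotProduct_sub]
    have c6 : (x' - xs) ⬝ᵥ C.mulVec ys = x' ⬝ᵥ C.mulVec ys - xs ⬝ᵥ C.mulVec ys := by
      rw [sub_dotProduct]
    have E1 : Tfun R C xs ys x' y' 1 (evec iR) (evec jC) = fR R xs ys + DR := by
      have ht : Tfun R C xs ys x' y' 1 (evec iR) (evec jC)
          = evec iR ⬝ᵥ R.mulVec y' - xs ⬝ᵥ R.mulVec y' - x' ⬝ᵥ R.mulVec ys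
            + xs ⬝ᵥ R.mulVec ys := by
        unfold Tfun; ring
      rw [ht, evec_dot]
      have h1 : (R.mulVec y') iR = (R.mulVec ys) iR + (R.mulVec (y' - ys)) iR := by
        rw [e4]; simp
      have h2 : (R.mulVec ys) iR = vmax (R.mulVec ys) := (vmax_eq_of_suppmax hiR).symm
      unfold fR
      rw [hDRdef, h1, h2, hbiR]
      linarith [e5, e6]
    have E2 : Tfun R C xs ys x' y' 0 (evec iR) (evec jC) = fC C xs ys + DC := by
      have ht : Tfun R C xs ys x' y' 0 (evec iR) (evec jC)
          = x' ⬝ᵥ C.mulVec (evec jC) - xs ⬝ᵥ C.mulVec y' - x' ⬝ᵥ C.mulVec ys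
            + xs ⬝ᵥ C.mulVec ys := by
        unfold Tfun; ring
      rw [ht, Matrix.dotProduct_mulVec, dot_evec]
      have h1 : (vecMul x' C) jC = (vecMul xs C) jC + (vecMul (x' - xs) C) jC := by
        rw [c4]; simp
      have h2 : (vecMul xs C) jC = vmax (vecMul xs C) := (vmax_eq_of_suppmax hjC).symm
      unfold fC
      rw [hDCdef, h1, h2, hbjC]
      linarith [c5, c6]
    have hbddA : BddAbove {t : ℝ | ∃ ρ w z, dualFeasible R C xs ys ρ w z
        ∧ t = Tfun R C xs ys x' y' ρ w z} := by
      refine ⟨2, ?_⟩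
      rintro t ⟨ρ, w, z, hf, rfl⟩
      exact (Tfun_bounds hR hC hf hxs hys hx' hy').2
    have hmax1 : fR R xs ys + DR ≤ innerMax R C xs ys x' y' :=
      le_csSup hbddA ⟨1, evec iR, evec jC, hfeas1, E1.symm⟩
    have hmax2 : fC C xs ys + DC ≤ innerMax R C xs ys x' y' :=
      le_csSup hbddA ⟨0, evec iR, evec jC, hfeas0, E2.symm⟩
    -- the directional derivative
    obtain ⟨d, hd, hd0⟩ := hstat x' hx' y' hy'
    rw [HasPosDeriv] at hd
    have hmain := deriv_le
      (gR := fun θ : ℝ => fR R (xs + θ • (x' - xs)) (ys + θ • (y' - ys)))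
      (gC := fun θ : ℝ => fC C (xs + θ • (x' - xs)) (ys + θ • (y' - ys)))
      (by norm_num) (by norm_num)
      (fR_eventual R xs (x' - xs) ys (y' - ys))
      (fC_eventual C xs (x' - xs) ys (y' - ys)) hd
    have h1 : fNE R C xs ys ≤ max (fR R xs ys + DR) (fC C xs ys + DC) := by
      have : fNE R C xs ys ≤ fNE R C xs ys + d := by linarith
      exact this.trans hmain
    exact h1.trans (max_le hmax1 hmax2)
  have stepB : fNE R C xs ys ≤ Vval R C xs ys := by
    refine le_csInf ⟨innerMax R C xs ys xs ys, xs, hxs, ys, hys, rfl⟩ ?_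
    rintro t ⟨x', hx', y', hy', rfl⟩
    exact stepA x' hx' y' hy'
  intro x' hx' y' hy'
  have hbddB : BddBelow {t : ℝ | ∃ x'' ∈ Δ (m+1), ∃ y'' ∈ Δ (n+1),
      t = Tfun R C xs ys x'' y'' ρs ws zs} := by
    refine ⟨-2, ?_⟩
    rintro t ⟨x'', hx'', y'', hy'', rfl⟩
    exact (Tfun_bounds hR hC hdual.1 hxs hys hx'' hy'').1
  calc fNE R C xs ys ≤ Vval R C xs ys := stepB
    _ = innerMin R C xs ys ρs ws zs := hdual.2
    _ ≤ Tfun R C xs ys x' y' ρs ws zs := csInf_le hbddB ⟨x', hx', y', hy', rfl⟩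

lemma dot_mulVec_combo (M : Matrix (Fin (m+1)) (Fin (n+1)) ℝ) (u : Fin (m+1) → ℝ)
    (z y : Fin (n+1) → ℝ) (β : ℝ) :
    u ⬝ᵥ M.mulVec (β • z + (1 - β) • y)
      = β * (u ⬝ᵥ M.mulVec z) + (1 - β) * (u ⬝ᵥ M.mulVec y) := by
  rw [mulVec_add, mulVec_smul, mulVec_smul, dotProduct_add, dotProduct_smul, dotProduct_smul,
    smul_eq_mul, smul_eq_mul]

lemma combo_dot_mulVec (M : Matrix (Fin (m+1)) (Fin (n+1)) ℝ) (w x : Fin (m+1) → ℝ)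
    (v : Fin (n+1) → ℝ) (α : ℝ) :
    (α • w + (1 - α) • x) ⬝ᵥ M.mulVec v
      = α * (w ⬝ᵥ M.mulVec v) + (1 - α) * (x ⬝ᵥ M.mulVec v) := by
  rw [add_dotProduct, smul_dotProduct, smul_dotProduct, smul_eq_mul, smul_eq_mul]

lemma vecMul_combo (C : Matrix (Fin (m+1)) (Fin (n+1)) ℝ) (w x : Fin (m+1) → ℝ) (α : ℝ) :
    vecMul (α • w + (1 - α) • x) C
      = fun j => (vecMul x C) j + α * ((vecMul w C) j - (vecMul x C) j) := by
  funext j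
  rw [add_vecMul, smul_vecMul, smul_vecMul]
  simp only [Pi.add_apply, Pi.smul_apply, smul_eq_mul]
  ring

lemma mulVec_combo (R : Matrix (Fin (m+1)) (Fin (n+1)) ℝ) (z y : Fin (n+1) → ℝ) (β : ℝ) :
    R.mulVec (β • z + (1 - β) • y)
      = fun i => (R.mulVec y) i + β * ((R.mulVec z) i - (R.mulVec y) i) := by
  funext i
  rw [mulVec_add, mulVec_smul, mulVec_smul]
  simp only [Pi.add_apply, Pi.smul_apply, smul_eq_mul]
  ring

lemma fR_section_eq (R : Matrix (Fin (m+1)) (Fin (n+1)) ℝ) (u : Fin (m+1) → ℝ)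
    (z y : Fin (n+1) → ℝ) (β : ℝ) :
    fR R u (β • z + (1 - β) • y)
      = vmax (fun i => (R.mulVec y) i + β * ((R.mulVec z) i - (R.mulVec y) i))
        - ((u ⬝ᵥ R.mulVec y) + β * (u ⬝ᵥ R.mulVec z - u ⬝ᵥ R.mulVec y)) := by
  unfold fR
  rw [dot_mulVec_combo, mulVec_combo]
  ring

lemma fC_section_eq (C : Matrix (Fin (m+1)) (Fin (n+1)) ℝ) (w x : Fin (m+1) → ℝ)
    (v : Fin (n+1) → ℝ) (α : ℝ) :
    fC C (α • w + (1 - α) • x) v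
      = vmax (fun j => (vecMul x C) j + α * ((vecMul w C) j - (vecMul x C) j))
        - ((x ⬝ᵥ C.mulVec v) + α * (w ⬝ᵥ C.mulVec v - x ⬝ᵥ C.mulVec v)) := by
  unfold fC
  rw [combo_dot_mulVec, vecMul_combo]
  ring

lemma vmax_combo_le {p q : Fin (k+1) → ℝ} {a b : ℝ} (ha : 0 ≤ a) (hb : 0 ≤ b) :
    vmax (fun i => a * p i + b * q i) ≤ a * vmax p + b * vmax q :=
  vmax_le fun i => add_le_add (mul_le_mul_of_nonneg_left (le_vmax p i) ha)
    (mul_le_mul_of_nonneg_left (le_vmax q i) hb)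

lemma combo_mem_Δ {p q : Fin (k+1) → ℝ} {t : ℝ} (hp : p ∈ Δ (k+1)) (hq : q ∈ Δ (k+1))
    (ht0 : 0 ≤ t) (ht1 : t ≤ 1) : t • p + (1 - t) • q ∈ Δ (k+1) := by
  constructor
  · intro i
    have := hp.1 i; have := hq.1 i
    simp only [Pi.add_apply, Pi.smul_apply, smul_eq_mul]
    nlinarith
  · simp only [Pi.add_apply, Pi.smul_apply, smul_eq_mul, Finset.sum_add_distrib,
      ← Finset.mul_sum, hp.2, hq.2, mul_one]
    ring

lemma convexOn_vmax_affine (c b : Fin (k+1) → ℝ) (t0 t1 : ℝ) :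
    ConvexOn ℝ (Set.Icc (0:ℝ) 1)
      (fun α : ℝ => vmax (fun i => c i + α * b i) - (t0 + α * t1)) := by
  refine ⟨convex_Icc 0 1, ?_⟩
  intro x hx y hy a a' ha ha' hab
  simp only [smul_eq_mul]
  have hfun : (fun i => c i + (a * x + a' * y) * b i)
      = fun i => a * (c i + x * b i) + a' * (c i + y * b i) := by
    funext i
    have h1 : a = 1 - a' := by linarith
    subst h1
    ring
  have hv : vmax (fun i => c i + (a * x + a' * y) * b i)
      ≤ a * vmax (fun i => c i + x * b i) + a' * vmax (fun i => c i + y * b i) := by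
    rw [hfun]
    exact vmax_combo_le ha ha'
  have hA : a * (vmax (fun i => c i + x * b i) - (t0 + x * t1))
        + a' * (vmax (fun i => c i + y * b i) - (t0 + y * t1))
      = a * vmax (fun i => c i + x * b i) + a' * vmax (fun i => c i + y * b i)
        - (t0 + (a * x + a' * y) * t1) := by
    have h1 : a = 1 - a' := by linarith
    subst h1
    ring
  linarith [hv, hA]

lemma monotoneOn_of_convex_min {G : ℝ → ℝ} (hG : ConvexOn ℝ (Set.Icc (0:ℝ) 1) G)
    (h0 : ∀ α ∈ Set.Icc (0:ℝ) 1, G 0 ≤ G α) : MonotoneOn G (Set.Icc (0:ℝ) 1) := by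
  intro a ha b hb hab
  rcases eq_or_lt_of_le hb.1 with hb0 | hb0
  · have ha0 : a = 0 := le_antisymm (hab.trans hb0.symm.le) ha.1
    rw [ha0, ← hb0]
  · set t := a / b with htdef
    have ht0 : 0 ≤ t := div_nonneg ha.1 hb0.le
    have ht1 : t ≤ 1 := div_le_one_of_le₀ hab hb0.le
    have hcomb := hG.2 (Set.left_mem_Icc.mpr zero_le_one) hb
      (by linarith : (0:ℝ) ≤ 1 - t) ht0 (by ring)
    have harg : (1 - t) • (0:ℝ) + t • b = a := by
      simp only [smul_eq_mul, htdef]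
      field_simp
      ring
    rw [harg] at hcomb
    simp only [smul_eq_mul] at hcomb
    have hgb := h0 b hb
    nlinarith [hcomb, hgb, ht0, ht1,
      mul_nonneg (by linarith : (0:ℝ) ≤ 1 - t) (by linarith : (0:ℝ) ≤ G b - G 0)]


lemma fR_nonneg {R : Matrix (Fin (m+1)) (Fin (n+1)) ℝ} {xs : Fin (m+1) → ℝ}
    {ys : Fin (n+1) → ℝ} (hxs : xs ∈ Δ (m+1)) : 0 ≤ fR R xs ys := by
  unfold fR
  linarith [dot_le_vmax (u := R.mulVec ys) hxs]

lemma fC_nonneg {C : Matrix (Fin (m+1)) (Fin (n+1)) ℝ} {xs : Fin (m+1) → ℝ}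
    {ys : Fin (n+1) → ℝ} (hys : ys ∈ Δ (n+1)) : 0 ≤ fC C xs ys := by
  unfold fC
  have h : xs ⬝ᵥ C.mulVec ys = ys ⬝ᵥ vecMul xs C := by
    rw [dotProduct_mulVec, dotProduct_comm]
  linarith [dot_le_vmax (u := vecMul xs C) hys, h]


/-- monotonicity/convexity/affinity of the sections of `F_R` and `F_C` on `Λ`. -/
theorem stmt4 {m n : ℕ} (R C : Matrix (Fin (m+1)) (Fin (n+1)) ℝ)
    (hR : ∀ i j, R i j ∈ Set.Icc (0:ℝ) 1) (hC : ∀ i j, C i j ∈ Set.Icc (0:ℝ) 1)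
    (xs : Fin (m+1) → ℝ) (ys : Fin (n+1) → ℝ) (ρs : ℝ) (ws : Fin (m+1) → ℝ) (zs : Fin (n+1) → ℝ)
    (hxs : xs ∈ Δ (m+1)) (hys : ys ∈ Δ (n+1))
    (hstat : IsStationary R C xs ys)
    (hdual : IsDualSolution R C xs ys ρs ws zs)
    (hρ : ρs ∈ Set.Ioo (0:ℝ) 1) :
    (∀ β ∈ Set.Icc (0:ℝ) 1,
      MonotoneOn (fun α : ℝ => fC C (α • ws + (1 - α) • xs) (β • zs + (1 - β) • ys))
        (Set.Icc (0:ℝ) 1) ∧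
      ConvexOn ℝ (Set.Icc (0:ℝ) 1)
        (fun α : ℝ => fC C (α • ws + (1 - α) • xs) (β • zs + (1 - β) • ys)) ∧
      AntitoneOn (fun α : ℝ => fR R (α • ws + (1 - α) • xs) (β • zs + (1 - β) • ys))
        (Set.Icc (0:ℝ) 1) ∧
      ∃ a c : ℝ, ∀ α ∈ Set.Icc (0:ℝ) 1,
        fR R (α • ws + (1 - α) • xs) (β • zs + (1 - β) • ys) = a * α + c) ∧
    (∀ α ∈ Set.Icc (0:ℝ) 1,
      MonotoneOn (fun β : ℝ => fR R (α • ws + (1 - α) • xs) (β • zs + (1 - β) • ys))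
        (Set.Icc (0:ℝ) 1) ∧
      ConvexOn ℝ (Set.Icc (0:ℝ) 1)
        (fun β : ℝ => fR R (α • ws + (1 - α) • xs) (β • zs + (1 - β) • ys)) ∧
      AntitoneOn (fun β : ℝ => fC C (α • ws + (1 - α) • xs) (β • zs + (1 - β) • ys))
        (Set.Icc (0:ℝ) 1) ∧
      ∃ a c : ℝ, ∀ β ∈ Set.Icc (0:ℝ) 1,
        fC C (α • ws + (1 - α) • xs) (β • zs + (1 - β) • ys) = a * β + c) := by
  obtain ⟨⟨hρ01, hws, hsw, hzs, hsz⟩, hVeq⟩ := id hdual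
  have hkey := keyT hR hC hxs hys hstat hdual
  have hfR0 : 0 ≤ fR R xs ys := fR_nonneg hxs
  have hfC0 : 0 ≤ fC C xs ys := fC_nonneg hys
  have hfNER : fR R xs ys ≤ fNE R C xs ys := le_max_left _ _
  have hfNEC : fC C xs ys ≤ fNE R C xs ys := le_max_right _ _
  -- λ* ≥ f_R
  have hT1 : Tfun R C xs ys xs zs ρs ws zs
      = ρs * (ws ⬝ᵥ R.mulVec zs - xs ⬝ᵥ R.mulVec zs) := by
    unfold Tfun; ring
  have h1 := hkey xs hxs zs hzs
  rw [hT1] at h1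
  have hlam0 : 0 ≤ ws ⬝ᵥ R.mulVec zs - xs ⬝ᵥ R.mulVec zs := by
    by_contra hc
    push_neg at hc
    nlinarith [h1, hfNER, hρ.1]
  have hlam : fR R xs ys ≤ ws ⬝ᵥ R.mulVec zs - xs ⬝ᵥ R.mulVec zs := by
    nlinarith [h1, hfNER, hlam0, hρ.2,
      mul_nonneg (by linarith [hρ.2] : (0:ℝ) ≤ 1 - ρs) hlam0]
  -- μ* ≥ f_C
  have hT2 : Tfun R C xs ys ws ys ρs ws zs
      = (1 - ρs) * (ws ⬝ᵥ C.mulVec zs - ws ⬝ᵥ C.mulVec ys) := by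
    unfold Tfun; ring
  have h2 := hkey ws hws ys hys
  rw [hT2] at h2
  have hmu0 : 0 ≤ ws ⬝ᵥ C.mulVec zs - ws ⬝ᵥ C.mulVec ys := by
    by_contra hc
    push_neg at hc
    nlinarith [h2, hfNEC, hρ.2]
  have hmu : fC C xs ys ≤ ws ⬝ᵥ C.mulVec zs - ws ⬝ᵥ C.mulVec ys := by
    nlinarith [h2, hfNEC, hmu0, hρ.1, mul_nonneg hρ.1.le hmu0]
  -- atom equalities
  have hwsRys : ws ⬝ᵥ R.mulVec ys = vmax (R.mulVec ys) := dot_eq_vmax hws hsw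
  have hxsCzs : xs ⬝ᵥ C.mulVec zs = vmax (vecMul xs C) := by
    rw [dotProduct_mulVec, dotProduct_comm]
    exact dot_eq_vmax hzs hsz
  have hfRatom : fR R xs ys = ws ⬝ᵥ R.mulVec ys - xs ⬝ᵥ R.mulVec ys := by
    unfold fR
    rw [hwsRys]
  have hfCatom : fC C xs ys = xs ⬝ᵥ C.mulVec zs - xs ⬝ᵥ C.mulVec ys := by
    unfold fC
    rw [hxsCzs]
  constructor
  · -- PART 1 : fixed β
    intro β hβ
    have hconvC : ConvexOn ℝ (Set.Icc (0:ℝ) 1)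
        (fun α : ℝ => fC C (α • ws + (1 - α) • xs) (β • zs + (1 - β) • ys)) := by
      have hfun : (fun α : ℝ => fC C (α • ws + (1 - α) • xs) (β • zs + (1 - β) • ys))
          = fun α : ℝ =>
            vmax (fun j => (vecMul xs C) j + α * ((vecMul ws C) j - (vecMul xs C) j))
              - ((xs ⬝ᵥ C.mulVec (β • zs + (1 - β) • ys))
                + α * (ws ⬝ᵥ C.mulVec (β • zs + (1 - β) • ys)
                    - xs ⬝ᵥ C.mulVec (β • zs + (1 - β) • ys))) :=
        funext fun α => fC_section_eq C ws xs (β • zs + (1 - β) • ys) α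
      rw [hfun]
      exact convexOn_vmax_affine _ _ _ _
    have hmonoC : MonotoneOn
        (fun α : ℝ => fC C (α • ws + (1 - α) • xs) (β • zs + (1 - β) • ys))
        (Set.Icc (0:ℝ) 1) := by
      refine monotoneOn_of_convex_min hconvC ?_
      intro α hα
      show fC C ((0:ℝ) • ws + (1 - (0:ℝ)) • xs) (β • zs + (1 - β) • ys)
        ≤ fC C (α • ws + (1 - α) • xs) (β • zs + (1 - β) • ys)
      have e0 : ((0:ℝ) • ws + (1 - (0:ℝ)) • xs) = xs := by
        norm_num
      rw [e0]
      have hL : fC C xs (β • zs + (1 - β) • ys) = (1 - β) * fC C xs ys := by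
        unfold fC
        rw [dot_mulVec_combo, hxsCzs]
        ring
      have hVge : α * (ws ⬝ᵥ C.mulVec zs) + (1 - α) * (xs ⬝ᵥ C.mulVec zs)
          ≤ vmax (vecMul (α • ws + (1 - α) • xs) C) := by
        have h := dot_le_vmax (u := vecMul (α • ws + (1 - α) • xs) C) hzs
        rw [dotProduct_comm, ← dotProduct_mulVec, combo_dot_mulVec] at h
        exact h
      have hR1 : fC C (α • ws + (1 - α) • xs) (β • zs + (1 - β) • ys)
          = vmax (vecMul (α • ws + (1 - α) • xs) C)
            - (β * (α * (ws ⬝ᵥ C.mulVec zs) + (1 - α) * (xs ⬝ᵥ C.mulVec zs))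
              + (1 - β) * (α * (ws ⬝ᵥ C.mulVec ys) + (1 - α) * (xs ⬝ᵥ C.mulVec ys))) := by
        unfold fC
        rw [dot_mulVec_combo, combo_dot_mulVec, combo_dot_mulVec]
      rw [hL, hR1, hfCatom]
      have hint : 0 ≤ (1 - β) * α * ((ws ⬝ᵥ C.mulVec zs - ws ⬝ᵥ C.mulVec ys)
          - (xs ⬝ᵥ C.mulVec zs - xs ⬝ᵥ C.mulVec ys)) := by
        apply mul_nonneg (mul_nonneg (by linarith [hβ.2]) hα.1)
        rw [← hfCatom]
        linarith [hmu]
      linarith [hVge, hint]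
    have hantiR : AntitoneOn
        (fun α : ℝ => fR R (α • ws + (1 - α) • xs) (β • zs + (1 - β) • ys))
        (Set.Icc (0:ℝ) 1) := by
      intro a ha b hb hab
      show fR R (b • ws + (1 - b) • xs) (β • zs + (1 - β) • ys)
        ≤ fR R (a • ws + (1 - a) • xs) (β • zs + (1 - β) • ys)
      have haf : ∀ γ : ℝ, fR R (γ • ws + (1 - γ) • xs) (β • zs + (1 - β) • ys)
          = vmax (R.mulVec (β • zs + (1 - β) • ys))
            - (γ * (ws ⬝ᵥ R.mulVec (β • zs + (1 - β) • ys))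
              + (1 - γ) * (xs ⬝ᵥ R.mulVec (β • zs + (1 - β) • ys))) := by
        intro γ
        unfold fR
        rw [combo_dot_mulVec]
      rw [haf a, haf b]
      have hslope : xs ⬝ᵥ R.mulVec (β • zs + (1 - β) • ys)
          ≤ ws ⬝ᵥ R.mulVec (β • zs + (1 - β) • ys) := by
        rw [dot_mulVec_combo, dot_mulVec_combo]
        nlinarith [hlam, hfR0, hfRatom,
          mul_nonneg hβ.1 (by linarith [hlam, hfR0] : (0:ℝ) ≤ ws ⬝ᵥ R.mulVec zs - xs ⬝ᵥ R.mulVec zs),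
          mul_nonneg (by linarith [hβ.2] : (0:ℝ) ≤ 1 - β)
            (by linarith [hfR0, hfRatom] : (0:ℝ) ≤ ws ⬝ᵥ R.mulVec ys - xs ⬝ᵥ R.mulVec ys)]
      nlinarith [mul_nonneg (sub_nonneg.mpr hab) (sub_nonneg.mpr hslope)]
    refine ⟨hmonoC, hconvC, hantiR, ?_⟩
    refine ⟨xs ⬝ᵥ R.mulVec (β • zs + (1 - β) • ys) - ws ⬝ᵥ R.mulVec (β • zs + (1 - β) • ys),
      vmax (R.mulVec (β • zs + (1 - β) • ys)) - xs ⬝ᵥ R.mulVec (β • zs + (1 - β) • ys), ?_⟩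
    intro α _
    unfold fR
    rw [combo_dot_mulVec]
    ring
  · -- PART 2 : fixed α
    intro α hα
    have hconvR : ConvexOn ℝ (Set.Icc (0:ℝ) 1)
        (fun β : ℝ => fR R (α • ws + (1 - α) • xs) (β • zs + (1 - β) • ys)) := by
      have hfun : (fun β : ℝ => fR R (α • ws + (1 - α) • xs) (β • zs + (1 - β) • ys))
          = fun β : ℝ =>
            vmax (fun i => (R.mulVec ys) i + β * ((R.mulVec zs) i - (R.mulVec ys) i))
              - (((α • ws + (1 - α) • xs) ⬝ᵥ R.mulVec ys)
                + β * ((α • ws + (1 - α) • xs) ⬝ᵥ R.mulVec zs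
                    - (α • ws + (1 - α) • xs) ⬝ᵥ R.mulVec ys)) :=
        funext fun β => fR_section_eq R (α • ws + (1 - α) • xs) zs ys β
      rw [hfun]
      exact convexOn_vmax_affine _ _ _ _
    have hmonoR : MonotoneOn
        (fun β : ℝ => fR R (α • ws + (1 - α) • xs) (β • zs + (1 - β) • ys))
        (Set.Icc (0:ℝ) 1) := by
      refine monotoneOn_of_convex_min hconvR ?_
      intro β hβ
      show fR R (α • ws + (1 - α) • xs) ((0:ℝ) • zs + (1 - (0:ℝ)) • ys)
        ≤ fR R (α • ws + (1 - α) • xs) (β • zs + (1 - β) • ys)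
      have e0 : ((0:ℝ) • zs + (1 - (0:ℝ)) • ys) = ys := by
        norm_num
      rw [e0]
      have hL : fR R (α • ws + (1 - α) • xs) ys = (1 - α) * fR R xs ys := by
        unfold fR
        rw [combo_dot_mulVec, hwsRys]
        ring
      have hVge : β * (ws ⬝ᵥ R.mulVec zs) + (1 - β) * (ws ⬝ᵥ R.mulVec ys)
          ≤ vmax (R.mulVec (β • zs + (1 - β) • ys)) := by
        have h := dot_le_vmax (u := R.mulVec (β • zs + (1 - β) • ys)) hws
        rw [dot_mulVec_combo] at h
        exact h
      have hR1 : fR R (α • ws + (1 - α) • xs) (β • zs + (1 - β) • ys)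
          = vmax (R.mulVec (β • zs + (1 - β) • ys))
            - (α * (β * (ws ⬝ᵥ R.mulVec zs) + (1 - β) * (ws ⬝ᵥ R.mulVec ys))
              + (1 - α) * (β * (xs ⬝ᵥ R.mulVec zs) + (1 - β) * (xs ⬝ᵥ R.mulVec ys))) := by
        unfold fR
        rw [combo_dot_mulVec, dot_mulVec_combo, dot_mulVec_combo]
      rw [hL, hR1, hfRatom]
      have hint : 0 ≤ (1 - α) * β * ((ws ⬝ᵥ R.mulVec zs - xs ⬝ᵥ R.mulVec zs)
          - (ws ⬝ᵥ R.mulVec ys - xs ⬝ᵥ R.mulVec ys)) := by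
        apply mul_nonneg (mul_nonneg (by linarith [hα.2]) hβ.1)
        rw [← hfRatom]
        linarith [hlam]
      linarith [hVge, hint]
    have hantiC : AntitoneOn
        (fun β : ℝ => fC C (α • ws + (1 - α) • xs) (β • zs + (1 - β) • ys))
        (Set.Icc (0:ℝ) 1) := by
      intro a ha b hb hab
      show fC C (α • ws + (1 - α) • xs) (b • zs + (1 - b) • ys)
        ≤ fC C (α • ws + (1 - α) • xs) (a • zs + (1 - a) • ys)
      have haf : ∀ γ : ℝ, fC C (α • ws + (1 - α) • xs) (γ • zs + (1 - γ) • ys)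
          = vmax (vecMul (α • ws + (1 - α) • xs) C)
            - (γ * ((α • ws + (1 - α) • xs) ⬝ᵥ C.mulVec zs)
              + (1 - γ) * ((α • ws + (1 - α) • xs) ⬝ᵥ C.mulVec ys)) := by
        intro γ
        unfold fC
        rw [dot_mulVec_combo]
      rw [haf a, haf b]
      have hslope : (α • ws + (1 - α) • xs) ⬝ᵥ C.mulVec ys
          ≤ (α • ws + (1 - α) • xs) ⬝ᵥ C.mulVec zs := by
        rw [combo_dot_mulVec, combo_dot_mulVec]
        nlinarith [hmu, hfC0, hfCatom,
          mul_nonneg hα.1 (by linarith [hmu, hfC0] : (0:ℝ) ≤ ws ⬝ᵥ C.mulVec zs - ws ⬝ᵥ C.mulVec ys),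
          mul_nonneg (by linarith [hα.2] : (0:ℝ) ≤ 1 - α)
            (by linarith [hfCatom ▸ hfC0] : (0:ℝ) ≤ xs ⬝ᵥ C.mulVec zs - xs ⬝ᵥ C.mulVec ys)]
      nlinarith [mul_nonneg (sub_nonneg.mpr hab) (sub_nonneg.mpr hslope)]
    refine ⟨hmonoR, hconvR, hantiC, ?_⟩
    refine ⟨(α • ws + (1 - α) • xs) ⬝ᵥ C.mulVec ys - (α • ws + (1 - α) • xs) ⬝ᵥ C.mulVec zs,
      vmax (vecMul (α • ws + (1 - α) • xs) C) - (α • ws + (1 - α) • xs) ⬝ᵥ C.mulVec ys, ?_⟩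
    intro β _
    unfold fC
    rw [dot_mulVec_combo]
    ring

end TS
end
end

section
/- For any bimatrix game with payoff matrices R, C having all entries in [0,1], every stationary point (x,y) satisfies f(x,y) ≤ 1/2. -/
open scoped BigOperators Classical
open Matrix Filter

noncomputable section

namespace TS

variable {m n : ℕ}

section AuxStmt10

lemma le_vmax_aux {k : ℕ} (u : Fin (k+1) → ℝ) (i : Fin (k+1)) : u i ≤ vmax u :=
  le_ciSup (Set.Finite.bddAbove (Set.finite_range u)) i

lemma vmax_le_aux {k : ℕ} {u : Fin (k+1) → ℝ} {c : ℝ} (h : ∀ i, u i ≤ c) : vmax u ≤ c :=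
  ciSup_le h

lemma vmax_eq_argmax_aux {k : ℕ} {u : Fin (k+1) → ℝ} {i : Fin (k+1)} (h : ∀ j, u j ≤ u i) :
    vmax u = u i :=
  le_antisymm (vmax_le_aux h) (le_vmax_aux u i)

lemma dot_nonneg_aux {k : ℕ} {p u : Fin (k+1) → ℝ} (hp : ∀ i, 0 ≤ p i) (hu : ∀ i, 0 ≤ u i) :
    0 ≤ p ⬝ᵥ u :=
  Finset.sum_nonneg fun i _ => mul_nonneg (hp i) (hu i)

lemma dot_le_one_aux {k : ℕ} {p u : Fin (k+1) → ℝ} (hp : p ∈ Δ (k+1)) (hu : ∀ i, u i ≤ 1) :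
    p ⬝ᵥ u ≤ 1 := by
  calc p ⬝ᵥ u = ∑ i, p i * u i := rfl
    _ ≤ ∑ i, p i := Finset.sum_le_sum fun i _ => mul_le_of_le_one_right (hp.1 i) (hu i)
    _ = 1 := hp.2

lemma mulVec_entry_aux {m n : ℕ} {R : Matrix (Fin (m+1)) (Fin (n+1)) ℝ}
    (hR : ∀ i j, R i j ∈ Set.Icc (0:ℝ) 1) {q : Fin (n+1) → ℝ} (hq : q ∈ Δ (n+1))
    (i : Fin (m+1)) : 0 ≤ R.mulVec q i ∧ R.mulVec q i ≤ 1 := by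
  have h1 : R.mulVec q i = ∑ j, R i j * q j := rfl
  constructor
  · rw [h1]; exact Finset.sum_nonneg fun j _ => mul_nonneg (hR i j).1 (hq.1 j)
  · rw [h1]
    calc ∑ j, R i j * q j ≤ ∑ j, q j :=
          Finset.sum_le_sum fun j _ => mul_le_of_le_one_left (hq.1 j) (hR i j).2
      _ = 1 := hq.2

lemma vecMul_entry_aux {m n : ℕ} {C : Matrix (Fin (m+1)) (Fin (n+1)) ℝ}
    (hC : ∀ i j, C i j ∈ Set.Icc (0:ℝ) 1) {p : Fin (m+1) → ℝ} (hp : p ∈ Δ (m+1))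
    (j : Fin (n+1)) : 0 ≤ Matrix.vecMul p C j ∧ Matrix.vecMul p C j ≤ 1 := by
  have h1 : Matrix.vecMul p C j = ∑ i, p i * C i j := rfl
  constructor
  · rw [h1]; exact Finset.sum_nonneg fun i _ => mul_nonneg (hp.1 i) (hC i j).1
  · rw [h1]
    calc ∑ i, p i * C i j ≤ ∑ i, p i :=
          Finset.sum_le_sum fun i _ => mul_le_of_le_one_right (hp.1 i) (hC i j).2
      _ = 1 := hp.2

end AuxStmt10

lemma branch_core_aux {θ fv Mv A B c3 : ℝ} (hθ0 : 0 ≤ θ) (_hθ1 : θ ≤ 1)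
    (h1 : A ≤ fv) (h2 : B ≤ Mv) (h3 : c3 ≤ 1) :
    (1-θ)^2*A + θ*B + θ^2*c3 ≤ (1-θ)^2*fv + θ*Mv + θ^2 := by
  have e1 := mul_le_mul_of_nonneg_left h1 (sq_nonneg (1-θ))
  have e2 := mul_le_mul_of_nonneg_left h2 hθ0
  have e3 := mul_le_mul_of_nonneg_left h3 (sq_nonneg θ)
  nlinarith [e1, e2, e3]

set_option maxHeartbeats 1000000 in
/-- every stationary point `(x,y)` satisfies `f(x,y) ≤ 1/2`. -/
theorem stmt10 {m n : ℕ} (R C : Matrix (Fin (m+1)) (Fin (n+1)) ℝ)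
    (hR : ∀ i j, R i j ∈ Set.Icc (0:ℝ) 1) (hC : ∀ i j, C i j ∈ Set.Icc (0:ℝ) 1)
    (x : Fin (m+1) → ℝ) (y : Fin (n+1) → ℝ) (hx : x ∈ Δ (m+1)) (hy : y ∈ Δ (n+1))
    (hstat : IsStationary R C x y) :
    fNE R C x y ≤ 1 / 2 := by
  classical
  obtain ⟨i₀, hi₀⟩ := Finite.exists_max (R.mulVec y)
  obtain ⟨j₀, hj₀⟩ := Finite.exists_max (Matrix.vecMul x C)
  set w : Fin (m+1) → ℝ := fun i => if i = i₀ then 1 else 0 with hw_def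
  set z : Fin (n+1) → ℝ := fun j => if j = j₀ then 1 else 0 with hz_def
  have hw : w ∈ Δ (m+1) :=
    ⟨fun i => by by_cases h : i = i₀ <;> simp [hw_def, h], by simp [hw_def]⟩
  have hz : z ∈ Δ (n+1) :=
    ⟨fun j => by by_cases h : j = j₀ <;> simp [hz_def, h], by simp [hz_def]⟩
  obtain ⟨d, hd, hd0⟩ := hstat w hw z hz
  set f := fNE R C x y with hf_def
  set M := max (fR R x z) (fC C w y) with hM_def
  set u := R.mulVec y with hu_def
  set v := R.mulVec z with hv_def
  set s := Matrix.vecMul x C with hs_def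
  set t := Matrix.vecMul w C with ht_def
  set p := C.mulVec y with hp_def
  set q := C.mulVec z with hq_def
  -- key identities
  have hwu : w ⬝ᵥ u = vmax u := by
    rw [vmax_eq_argmax_aux hi₀]
    simp [hw_def, dotProduct, ite_mul]
  have hxq : x ⬝ᵥ q = vmax s := by
    rw [hq_def, Matrix.dotProduct_mulVec, vmax_eq_argmax_aux hj₀]
    simp [hz_def, hs_def, dotProduct, mul_ite]
  -- entry bounds
  have hvb := mulVec_entry_aux hR hz
  have htb := vecMul_entry_aux hC hw
  have hpb := mulVec_entry_aux hC hy
  have hqb := mulVec_entry_aux hC hz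
  -- dot product bounds
  have hxv1 : x ⬝ᵥ v ≤ 1 := dot_le_one_aux hx fun i => (hvb i).2
  have hxv0 : 0 ≤ x ⬝ᵥ v := dot_nonneg_aux hx.1 fun i => (hvb i).1
  have hwv0 : 0 ≤ w ⬝ᵥ v := dot_nonneg_aux hw.1 fun i => (hvb i).1
  have hwp1 : w ⬝ᵥ p ≤ 1 := dot_le_one_aux hw fun i => (hpb i).2
  have hwp0 : 0 ≤ w ⬝ᵥ p := dot_nonneg_aux hw.1 fun i => (hpb i).1
  have hwq0 : 0 ≤ w ⬝ᵥ q := dot_nonneg_aux hw.1 fun i => (hqb i).1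
  have hvmv : vmax v ≤ 1 := vmax_le_aux fun i => (hvb i).2
  have hvmt : vmax t ≤ 1 := vmax_le_aux fun j => (htb j).2
  -- fR/fC facts
  have hfRxy : fR R x y = vmax u - x ⬝ᵥ u := rfl
  have hfCxy : fC C x y = vmax s - x ⬝ᵥ p := rfl
  have hfRxz : fR R x z = vmax v - x ⬝ᵥ v := rfl
  have hfCwy : fC C w y = vmax t - w ⬝ᵥ p := rfl
  have hfRf : vmax u - x ⬝ᵥ u ≤ f := hfRxy ▸ le_max_left _ _
  have hfCf : vmax s - x ⬝ᵥ p ≤ f := hfCxy ▸ le_max_right _ _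
  have hMR : vmax v - x ⬝ᵥ v ≤ M := hfRxz ▸ le_max_left _ _
  have hMC : vmax t - w ⬝ᵥ p ≤ M := hfCwy ▸ le_max_right _ _
  have hM1 : M ≤ 1 := by
    rw [hM_def, hfRxz, hfCwy]
    exact max_le (by linarith) (by linarith)
  -- the limit of the bounding function
  have htend : Tendsto (fun θ : ℝ => (θ - 2) * f + M + θ) (nhdsWithin 0 (Set.Ioi 0))
      (nhds (((0:ℝ) - 2) * f + M + 0)) := by
    apply Tendsto.mono_left _ nhdsWithin_le_nhds
    exact (Continuous.tendsto (by continuity) 0)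
  -- eventual bound on the difference quotient
  have hev : (fun θ : ℝ => (fNE R C (x + θ • (w - x)) (y + θ • (z - y)) -
        fNE R C (x + (0:ℝ) • (w - x)) (y + (0:ℝ) • (z - y))) / θ)
      ≤ᶠ[nhdsWithin 0 (Set.Ioi 0)] fun θ : ℝ => (θ - 2) * f + M + θ := by
    filter_upwards [Ioo_mem_nhdsGT_of_mem (Set.left_mem_Ico.2 one_pos)] with θ hθ
    obtain ⟨hθ0, hθ1⟩ := hθ
    have hg0 : fNE R C (x + (0:ℝ) • (w - x)) (y + (0:ℝ) • (z - y)) = f := by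
      simp [hf_def]
    rw [hg0, div_le_iff₀ hθ0]
    have hGθ : fNE R C (x + θ • (w - x)) (y + θ • (z - y))
        ≤ (1 - θ)^2 * f + θ * M + θ^2 := by
      have hmvR : R.mulVec (y + θ • (z - y)) = u + θ • (v - u) := by
        rw [Matrix.mulVec_add, Matrix.mulVec_smul, Matrix.mulVec_sub]
      have hmvC : C.mulVec (y + θ • (z - y)) = p + θ • (q - p) := by
        rw [Matrix.mulVec_add, Matrix.mulVec_smul, Matrix.mulVec_sub]
      have hvmulC : Matrix.vecMul (x + θ • (w - x)) C = s + θ • (t - s) := by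
        rw [Matrix.add_vecMul, Matrix.smul_vecMul, Matrix.sub_vecMul]
      have hvmR : vmax (u + θ • (v - u)) ≤ (1 - θ) * vmax u + θ * vmax v := by
        apply vmax_le_aux
        intro i
        have h3 : (u + θ • (v - u)) i = (1 - θ) * u i + θ * v i := by
          simp [smul_eq_mul]; ring
        rw [h3]
        exact add_le_add
          (mul_le_mul_of_nonneg_left (le_vmax_aux u i) (by linarith))
          (mul_le_mul_of_nonneg_left (le_vmax_aux v i) hθ0.le)
      have hvmC : vmax (s + θ • (t - s)) ≤ (1 - θ) * vmax s + θ * vmax t := by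
        apply vmax_le_aux
        intro j
        have h3 : (s + θ • (t - s)) j = (1 - θ) * s j + θ * t j := by
          simp [smul_eq_mul]; ring
        rw [h3]
        exact add_le_add
          (mul_le_mul_of_nonneg_left (le_vmax_aux s j) (by linarith))
          (mul_le_mul_of_nonneg_left (le_vmax_aux t j) hθ0.le)
      have hdotR : (x + θ • (w - x)) ⬝ᵥ (u + θ • (v - u)) =
          x ⬝ᵥ u + θ * (x ⬝ᵥ v + w ⬝ᵥ u - 2 * (x ⬝ᵥ u))
            + θ^2 * (w ⬝ᵥ v - x ⬝ᵥ v - w ⬝ᵥ u + x ⬝ᵥ u) := by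
        simp [dotProduct_add, add_dotProduct, dotProduct_smul,
          smul_dotProduct, dotProduct_sub, sub_dotProduct, smul_eq_mul]
        ring
      have hdotC : (x + θ • (w - x)) ⬝ᵥ (p + θ • (q - p)) =
          x ⬝ᵥ p + θ * (x ⬝ᵥ q + w ⬝ᵥ p - 2 * (x ⬝ᵥ p))
            + θ^2 * (w ⬝ᵥ q - x ⬝ᵥ q - w ⬝ᵥ p + x ⬝ᵥ p) := by
        simp [dotProduct_add, add_dotProduct, dotProduct_smul,
          smul_dotProduct, dotProduct_sub, sub_dotProduct, smul_eq_mul]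
        ring
      have hRbranch : fR R (x + θ • (w - x)) (y + θ • (z - y))
          ≤ (1 - θ)^2 * f + θ * M + θ^2 := by
        have h0 : fR R (x + θ • (w - x)) (y + θ • (z - y)) =
            vmax (u + θ • (v - u)) - (x + θ • (w - x)) ⬝ᵥ (u + θ • (v - u)) := by
          rw [fR, hmvR]
        rw [h0]
        refine le_trans (sub_le_sub_right hvmR _) ?_
        rw [hdotR, hwu]
        calc (1 - θ) * vmax u + θ * vmax v -
              (x ⬝ᵥ u + θ * (x ⬝ᵥ v + vmax u - 2 * (x ⬝ᵥ u))
                + θ^2 * (w ⬝ᵥ v - x ⬝ᵥ v - vmax u + x ⬝ᵥ u))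
            = (1 - θ)^2 * (vmax u - x ⬝ᵥ u) + θ * (vmax v - x ⬝ᵥ v)
              + θ^2 * (x ⬝ᵥ v - w ⬝ᵥ v) := by ring
          _ ≤ (1 - θ)^2 * f + θ * M + θ^2 :=
              branch_core_aux hθ0.le hθ1.le hfRf hMR (by linarith)
      have hCbranch : fC C (x + θ • (w - x)) (y + θ • (z - y))
          ≤ (1 - θ)^2 * f + θ * M + θ^2 := by
        have h0 : fC C (x + θ • (w - x)) (y + θ • (z - y)) =
            vmax (s + θ • (t - s)) - (x + θ • (w - x)) ⬝ᵥ (p + θ • (q - p)) := by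
          rw [fC, hvmulC, hmvC]
        rw [h0]
        refine le_trans (sub_le_sub_right hvmC _) ?_
        rw [hdotC, hxq]
        calc (1 - θ) * vmax s + θ * vmax t -
              (x ⬝ᵥ p + θ * (vmax s + w ⬝ᵥ p - 2 * (x ⬝ᵥ p))
                + θ^2 * (w ⬝ᵥ q - vmax s - w ⬝ᵥ p + x ⬝ᵥ p))
            = (1 - θ)^2 * (vmax s - x ⬝ᵥ p) + θ * (vmax t - w ⬝ᵥ p)
              + θ^2 * (w ⬝ᵥ p - w ⬝ᵥ q) := by ring
          _ ≤ (1 - θ)^2 * f + θ * M + θ^2 :=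
              branch_core_aux hθ0.le hθ1.le hfCf hMC (by linarith)
      exact max_le hRbranch hCbranch
    have hring : (1 - θ)^2 * f + θ * M + θ^2 - f = θ * ((θ - 2) * f + M + θ) := by ring
    linarith
  have hkey : d ≤ ((0:ℝ) - 2) * f + M + 0 := le_of_tendsto_of_tendsto hd htend hev
  linarith


end TS
end
end

section
/- For the 2×2 bimatrix game with payoff matrices R = [[1/2, 0], [1, 1]] and C = [[1/2, 1], [0, 1]], the pair x* = y* = (1,0)ᵀ is a stationary point with dual solution ρ* = 1/2, w* = z* = (0,1)ᵀ, and f(x*,y*) = 1/2. -/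
open scoped BigOperators Classical
open Matrix Filter

noncomputable section

namespace TS

variable {m n : ℕ}

/-- The row matrix of the `1/2`-instance. -/
def R11 : Matrix (Fin 2) (Fin 2) ℝ := !![1/2, 0; 1, 1]

/-- The column matrix of the `1/2`-instance. -/
def C11 : Matrix (Fin 2) (Fin 2) ℝ := !![1/2, 1; 0, 1]

lemma vmax_two (u : Fin 2 → ℝ) : vmax u = max (u 0) (u 1) := by
  apply le_antisymm
  · exact ciSup_le fun i => by fin_cases i; exacts [le_max_left _ _, le_max_right _ _]
  · exact max_le (le_ciSup (Set.finite_range u).bddAbove 0)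
      (le_ciSup (Set.finite_range u).bddAbove 1)

lemma dot_two (u v : Fin 2 → ℝ) : u ⬝ᵥ v = u 0 * v 0 + u 1 * v 1 := by
  simp [dotProduct, Fin.sum_univ_two]

lemma mulVec_R11 (y : Fin 2 → ℝ) : R11.mulVec y = ![y 0 / 2, y 0 + y 1] := by
  funext i; fin_cases i <;> simp [R11, Matrix.mulVec, dotProduct, Fin.sum_univ_two] <;> ring

lemma mulVec_C11 (y : Fin 2 → ℝ) : C11.mulVec y = ![y 0 / 2 + y 1, y 1] := by
  funext i; fin_cases i <;> simp [C11, Matrix.mulVec, dotProduct, Fin.sum_univ_two] <;> ring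

lemma vecMul_C11 (x : Fin 2 → ℝ) : Matrix.vecMul x C11 = ![x 0 / 2, x 0 + x 1] := by
  funext i; fin_cases i <;> simp [C11, Matrix.vecMul, dotProduct, Fin.sum_univ_two] <;> ring

lemma mem_delta_two {v : Fin 2 → ℝ} (h : v ∈ Δ 2) : 0 ≤ v 0 ∧ 0 ≤ v 1 ∧ v 0 + v 1 = 1 :=
  ⟨h.1 0, h.1 1, by have := h.2; rwa [Fin.sum_univ_two] at this⟩

lemma e0_mem : (![1, 0] : Fin 2 → ℝ) ∈ Δ 2 :=
  ⟨fun i => by fin_cases i <;> norm_num, by simp [Fin.sum_univ_two]⟩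

lemma e1_mem : (![0, 1] : Fin 2 → ℝ) ∈ Δ 2 :=
  ⟨fun i => by fin_cases i <;> norm_num, by simp [Fin.sum_univ_two]⟩

lemma fNE_val (a b θ : ℝ) (ha : 0 ≤ a) (hb : 0 ≤ b) (hθ : 0 ≤ θ) :
    fNE R11 C11 ![1 - θ*a, θ*a] ![1 - θ*b, θ*b]
      = 1/2 + θ * |b - a| / 2 - θ^2 * (a*b) / 2 := by
  unfold fNE fR fC
  rw [mulVec_R11, vecMul_C11, mulVec_C11, vmax_two, vmax_two, dot_two, dot_two]
  simp only [Matrix.cons_val_zero, Matrix.cons_val_one, Matrix.head_cons]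
  have h1 : max ((1 - θ*b)/2) (1 - θ*b + θ*b) = 1 := by
    rw [max_eq_right (by nlinarith)]; ring
  have h2 : max ((1 - θ*a)/2) (1 - θ*a + θ*a) = 1 := by
    rw [max_eq_right (by nlinarith)]; ring
  rw [h1, h2]
  rcases le_total a b with hab | hab
  · rw [abs_of_nonneg (by linarith), max_eq_left (by nlinarith)]; ring
  · rw [abs_of_nonpos (by linarith), max_eq_right (by nlinarith)]; ring

lemma fNE_base : fNE R11 C11 ![1, 0] ![1, 0] = 1/2 := by
  unfold fNE fR fC
  rw [mulVec_R11, vecMul_C11, mulVec_C11]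
  simp only [vmax_two, dot_two]
  norm_num

lemma feas_any {ρ : ℝ} (hρ : ρ ∈ Set.Icc (0:ℝ) 1) :
    dualFeasible R11 C11 ![1, 0] ![1, 0] ρ ![0, 1] ![0, 1] := by
  refine ⟨hρ, e1_mem, ?_, e1_mem, ?_⟩
  · intro i hi
    fin_cases i
    · simp [supp] at hi
    · simp only [SR, suppmax, Set.mem_setOf_eq, mulVec_R11]
      intro j; fin_cases j <;> norm_num
  · intro i hi
    fin_cases i
    · simp [supp] at hi
    · simp only [SC, suppmax, Set.mem_setOf_eq, vecMul_C11]
      intro j; fin_cases j <;> norm_num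

lemma forced {ρ : ℝ} {w z : Fin 2 → ℝ} (h : dualFeasible R11 C11 ![1, 0] ![1, 0] ρ w z) :
    w = ![0, 1] ∧ z = ![0, 1] := by
  obtain ⟨hρ, hw, hws, hz, hzs⟩ := h
  have hw0 : w 0 = 0 := by
    by_contra h0
    have hpos : 0 < w 0 := lt_of_le_of_ne (hw.1 0) (Ne.symm h0)
    have hmem := hws hpos
    simp only [SR, suppmax, Set.mem_setOf_eq, mulVec_R11] at hmem
    have := hmem 1; norm_num at this
  have hz0 : z 0 = 0 := by
    by_contra h0
    have hpos : 0 < z 0 := lt_of_le_of_ne (hz.1 0) (Ne.symm h0)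
    have hmem := hzs hpos
    simp only [SC, suppmax, Set.mem_setOf_eq, vecMul_C11] at hmem
    have := hmem 1; norm_num at this
  obtain ⟨_, _, hwsum⟩ := mem_delta_two hw
  obtain ⟨_, _, hzsum⟩ := mem_delta_two hz
  constructor
  · funext i; fin_cases i
    · simpa using hw0
    · simp; linarith
  · funext i; fin_cases i
    · simpa using hz0
    · simp; linarith

lemma Tfun_formula (ρ : ℝ) (x' y' : Fin 2 → ℝ) (hx : x' 0 + x' 1 = 1) (hy : y' 0 + y' 1 = 1) :
    Tfun R11 C11 ![1, 0] ![1, 0] x' y' ρ ![0, 1] ![0, 1]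
      = ρ * ((1 + y' 1 - x' 1)/2) + (1 - ρ) * ((1 + x' 1 - y' 1)/2) := by
  unfold Tfun
  simp only [mulVec_R11, mulVec_C11, dot_two, Matrix.cons_val_zero, Matrix.cons_val_one,
    Matrix.head_cons]
  rw [show x' 0 = 1 - x' 1 by linarith, show y' 0 = 1 - y' 1 by linarith]
  ring

lemma inner_half_mem {x' y' : Fin 2 → ℝ} (hx : x' ∈ Δ 2) (hy : y' ∈ Δ 2) :
    (1/2 : ℝ) ∈ {t : ℝ | ∃ ρ w z, dualFeasible R11 C11 ![1, 0] ![1, 0] ρ w z ∧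
      t = Tfun R11 C11 ![1, 0] ![1, 0] x' y' ρ w z} := by
  refine ⟨1/2, ![0, 1], ![0, 1], feas_any (by norm_num), ?_⟩
  rw [Tfun_formula _ _ _ (mem_delta_two hx).2.2 (mem_delta_two hy).2.2]; ring

lemma inner_bdd {x' y' : Fin 2 → ℝ} (hx : x' ∈ Δ 2) (hy : y' ∈ Δ 2) :
    BddAbove {t : ℝ | ∃ ρ w z, dualFeasible R11 C11 ![1, 0] ![1, 0] ρ w z ∧
      t = Tfun R11 C11 ![1, 0] ![1, 0] x' y' ρ w z} := by
  refine ⟨1, fun t ht => ?_⟩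
  obtain ⟨ρ, w, z, hf, rfl⟩ := ht
  obtain ⟨hw, hz⟩ := forced hf
  subst hw; subst hz
  obtain ⟨hρ0, hρ1⟩ := hf.1
  obtain ⟨hx0, hx1, hxs⟩ := mem_delta_two hx
  obtain ⟨hy0, hy1, hys⟩ := mem_delta_two hy
  rw [Tfun_formula _ _ _ hxs hys]
  nlinarith [mul_nonneg hρ0 (show (0:ℝ) ≤ 1 - (y' 1 - x' 1) by linarith),
    mul_nonneg (show (0:ℝ) ≤ 1 - ρ by linarith) (show (0:ℝ) ≤ 1 - (x' 1 - y' 1) by linarith)]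

lemma innerMax_e0 : innerMax R11 C11 ![1, 0] ![1, 0] ![1, 0] ![1, 0] = 1/2 := by
  unfold innerMax
  have hset : {t : ℝ | ∃ ρ w z, dualFeasible R11 C11 ![1, 0] ![1, 0] ρ w z ∧
      t = Tfun R11 C11 ![1, 0] ![1, 0] ![1, 0] ![1, 0] ρ w z} = {1/2} := by
    ext t
    simp only [Set.mem_setOf_eq, Set.mem_singleton_iff]
    constructor
    · rintro ⟨ρ, w, z, hf, rfl⟩
      obtain ⟨hw, hz⟩ := forced hf
      subst hw; subst hz
      rw [Tfun_formula _ _ _ (mem_delta_two e0_mem).2.2 (mem_delta_two e0_mem).2.2]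
      ring
    · rintro rfl
      exact inner_half_mem e0_mem e0_mem
  rw [hset, csSup_singleton]

lemma Vval_eq : Vval R11 C11 ![1, 0] ![1, 0] = 1/2 := by
  unfold Vval
  apply IsLeast.csInf_eq
  constructor
  · exact ⟨![1, 0], e0_mem, ![1, 0], e0_mem, innerMax_e0.symm⟩
  · rintro t ⟨x', hx', y', hy', rfl⟩
    exact le_csSup (inner_bdd hx' hy') (inner_half_mem hx' hy')

lemma innerMin_eq : innerMin R11 C11 ![1, 0] ![1, 0] (1/2) ![0, 1] ![0, 1] = 1/2 := by
  unfold innerMin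
  have hset : {t : ℝ | ∃ x' ∈ Δ 2, ∃ y' ∈ Δ 2,
      t = Tfun R11 C11 ![1, 0] ![1, 0] x' y' (1/2) ![0, 1] ![0, 1]} = {1/2} := by
    ext t
    simp only [Set.mem_setOf_eq, Set.mem_singleton_iff]
    constructor
    · rintro ⟨x', hx', y', hy', rfl⟩
      rw [Tfun_formula _ _ _ (mem_delta_two hx').2.2 (mem_delta_two hy').2.2]
      ring
    · rintro rfl
      refine ⟨![1, 0], e0_mem, ![1, 0], e0_mem, ?_⟩
      rw [Tfun_formula _ _ _ (mem_delta_two e0_mem).2.2 (mem_delta_two e0_mem).2.2]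
      ring
  rw [hset, csInf_singleton]

/-- for the game `(R11, C11)`, `x* = y* = (1,0)ᵀ` is a stationary point with
dual solution `ρ* = 1/2`, `w* = z* = (0,1)ᵀ`, and `f(x*,y*) = 1/2`. -/
theorem stmt11 :
    IsStationary R11 C11 ![1, 0] ![1, 0] ∧
    IsDualSolution R11 C11 ![1, 0] ![1, 0] (1/2) ![0, 1] ![0, 1] ∧
    fNE R11 C11 ![1, 0] ![1, 0] = 1 / 2 := by
  refine ⟨?_, ⟨feas_any (by norm_num), by rw [Vval_eq, innerMin_eq]⟩, fNE_base⟩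
  intro x' hx' y' hy'
  obtain ⟨hx0, hx1, hxs⟩ := mem_delta_two hx'
  obtain ⟨hy0, hy1, hys⟩ := mem_delta_two hy'
  refine ⟨|y' 1 - x' 1| / 2, ?_, by positivity⟩
  have hxv : ∀ θ : ℝ, (![1, 0] : Fin 2 → ℝ) + θ • (x' - ![1, 0]) = ![1 - θ * x' 1, θ * x' 1] := by
    intro θ; funext i; fin_cases i
    · show (1:ℝ) + θ * (x' 0 - 1) = 1 - θ * x' 1
      linear_combination θ * hxs
    · show (0:ℝ) + θ * (x' 1 - 0) = θ * x' 1
      ring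
  have hyv : ∀ θ : ℝ, (![1, 0] : Fin 2 → ℝ) + θ • (y' - ![1, 0]) = ![1 - θ * y' 1, θ * y' 1] := by
    intro θ; funext i; fin_cases i
    · show (1:ℝ) + θ * (y' 0 - 1) = 1 - θ * y' 1
      linear_combination θ * hys
    · show (0:ℝ) + θ * (y' 1 - 0) = θ * y' 1
      ring
  have key : ∀ θ : ℝ, 0 ≤ θ →
      fNE R11 C11 (![1, 0] + θ • (x' - ![1, 0])) (![1, 0] + θ • (y' - ![1, 0]))
        = 1/2 + θ * |y' 1 - x' 1| / 2 - θ^2 * (x' 1 * y' 1) / 2 := by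
    intro θ hθ; rw [hxv θ, hyv θ]; exact fNE_val _ _ _ hx1 hy1 hθ
  unfold HasPosDeriv
  have hT : Tendsto (fun θ : ℝ => |y' 1 - x' 1| / 2 - θ * (x' 1 * y' 1) / 2)
      (nhdsWithin 0 (Set.Ioi 0)) (nhds (|y' 1 - x' 1| / 2)) := by
    have hc : Continuous fun θ : ℝ => |y' 1 - x' 1| / 2 - θ * (x' 1 * y' 1) / 2 := by fun_prop
    have := (hc.tendsto 0).mono_left (nhdsWithin_le_nhds (s := Set.Ioi (0:ℝ)))
    simpa using this
  refine hT.congr' ?_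
  filter_upwards [self_mem_nhdsWithin] with θ hθ
  have hθ0 : (0:ℝ) < θ := hθ
  simp only [key θ hθ0.le, key 0 le_rfl]
  field_simp
  ring


end TS
end
end
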